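/- The q-Dyson product D_n(x, a, q) = ∏_{0 ≤ i < j ≤ n} (x_i/x_j; q)_{a_i} (q x_j/x_i; q)_{a_j} satisfies π(D_n(x, (a_0,...,a_n), q)) = D_n(x, (a_n, a_0, ..., a_{n-1}), q), where π is the substitution x_i ↦ x_{i+1} for i < n and x_n ↦ x_0/q. Consequently, for any Laurent polynomial L(x), CT_x L(x) D_n(x, a, q) = CT_x π(L(x)) D_n(x, (a_n, a_0, ..., a_{n-1}), q). -/

import Mathlib

open Finsupp
noncomputable section
abbrev Lau (n : ℕ) := AddMonoidAlgebra (RatFunc ℚ) (Fin (n+1) →₀ ℤ)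
def qq : RatFunc ℚ := RatFunc.X
def sc {n : ℕ} (c : RatFunc ℚ) : Lau n := AddMonoidAlgebra.single 0 c
def mono {n : ℕ} (e : Fin (n+1) →₀ ℤ) : Lau n := AddMonoidAlgebra.single e 1
def CT {n : ℕ} (f : Lau n) : RatFunc ℚ := f.coeff 0
def qDyson (n : ℕ) (a : Fin (n+1) → ℕ) : Lau n :=
  ∏ p ∈ Finset.univ.filter (fun p : Fin (n+1) × Fin (n+1) => p.1 < p.2),
    ((∏ k ∈ Finset.range (a p.1),
        (1 - sc (qq ^ k) * mono (single p.1 1 - single p.2 1))) *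
     (∏ k ∈ Finset.range (a p.2),
        (1 - sc (qq ^ (k+1)) * mono (single p.2 1 - single p.1 1))))
def cyc {n : ℕ} (e : Fin (n+1) →₀ ℤ) : Fin (n+1) →₀ ℤ :=
  Finsupp.equivMapDomain (finRotate (n+1)) e
/-- the substitution `π F (x_0,…,x_n) = F (x_1, …, x_n, x_0/q)` -/
def piOp {n : ℕ} (F : Lau n) : Lau n :=
  F.coeff.sum fun e c => AddMonoidAlgebra.single (cyc e) (c * qq ^ (-(e (Fin.last n))))

/-! The substitution `π` is the `RatFunc ℚ`-algebra endomorphism `x^e ↦ q^(-e_n) x^(ρ e)` of the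
Laurent polynomial ring, `ρ` the cyclic rotation of the variables; it fixes constant terms
because `ρ` is injective on exponents. Write the q-Dyson product as the product over ordered
pairs `i ≠ j` of `(q^[j < i] x_i/x_j; q)_{a_i}`. Then `π` sends the factor of `(i, j)` to the
factor of `(ρ i, ρ j)` for the rotated parameters: the power of `q` produced by `x_n ↦ x_0/q`
is exactly the change of `[j < i]` into `[ρ j < ρ i]`, as `ρ` preserves the order except
that it moves `n` to `0`. -/

namespace AddMonoidAlgebra
variable {k G H : Type*} [CommSemiring k] [AddCommMonoid G] [AddCommMonoid H]

def twistMapDomain (f : G →+ H) (χ : Multiplicative G →* k) : k[G] →ₐ[k] k[H] :=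
  lift k k[H] G ((of k H).comp (AddMonoidHom.toMultiplicative f) *
    (algebraMap k k[H] : k →* k[H]).comp χ)

theorem twistMapDomain_single (f : G →+ H) (χ : Multiplicative G →* k) (e : G) (c : k) :
    twistMapDomain f χ (single e c) = single (f e) (c * χ (.ofAdd e)) := by
  simp [twistMapDomain, coe_algebraMap, single_mul_single, mul_comm]

theorem coeff_twistMapDomain_zero {f : G →+ H} (hf : Function.Injective f)
    (χ : Multiplicative G →* k) (x : k[G]) :
    (twistMapDomain f χ x).coeff 0 = x.coeff 0 := by
  induction x using AddMonoidAlgebra.induction_linear with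
  | zero => simp
  | add x y hx hy => simp [hx, hy]
  | single e c =>
    classical
    rw [twistMapDomain_single, coeff_single, coeff_single, Finsupp.single_apply,
      Finsupp.single_apply]
    simp only [map_eq_zero_iff f hf]
    split_ifs with he
    · simp [he]
    · rfl

end AddMonoidAlgebra

theorem Finset.prod_offDiag_univ_eq_prod_lt {ι M : Type*} [LinearOrder ι] [Fintype ι]
    [CommMonoid M] (f : ι → ι → M) :
    ∏ p ∈ (univ : Finset ι).offDiag, f p.1 p.2 =
      ∏ p ∈ univ.filter (fun p : ι × ι => p.1 < p.2), (f p.1 p.2 * f p.2 p.1) := by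
  rw [prod_mul_distrib, ← prod_filter_mul_prod_filter_not _ (fun p : ι × ι => p.1 < p.2)]
  congr 1
  · refine prod_congr ?_ fun _ _ => rfl
    ext p
    simpa using ne_of_lt
  · refine prod_nbij' Prod.swap Prod.swap ?_ ?_ (fun _ _ => rfl) (fun _ _ => rfl)
      (fun _ _ => rfl)
    · simp only [mem_filter, mem_offDiag, mem_univ, true_and, not_lt, Prod.fst_swap,
        Prod.snd_swap]
      exact fun p ⟨hne, hle⟩ => lt_of_le_of_ne hle (Ne.symm hne)
    · simp only [mem_filter, mem_offDiag, mem_univ, true_and, not_lt, Prod.fst_swap,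
        Prod.snd_swap]
      exact fun p h => ⟨ne_of_gt h, le_of_lt h⟩

namespace QDyson
variable {n : ℕ}

lemma qq_ne_zero : qq ≠ 0 := RatFunc.X_ne_zero

def qPowNegLast (n : ℕ) : Multiplicative (Fin (n+1) →₀ ℤ) →* RatFunc ℚ where
  toFun e := qq ^ (-(e.toAdd (Fin.last n)))
  map_one' := by simp
  map_mul' e f := by simp [zpow_add₀ qq_ne_zero, mul_comm]

def piHom (n : ℕ) : Lau n →ₐ[RatFunc ℚ] Lau n :=
  AddMonoidAlgebra.twistMapDomain (Finsupp.domCongr (finRotate (n+1))).toAddMonoidHom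
    (qPowNegLast n)

lemma piHom_single (e : Fin (n+1) →₀ ℤ) (c : RatFunc ℚ) :
    piHom n (AddMonoidAlgebra.single e c) =
      AddMonoidAlgebra.single (cyc e) (c * qq ^ (-(e (Fin.last n)))) :=
  AddMonoidAlgebra.twistMapDomain_single _ _ e c

lemma piOp_eq_piHom (F : Lau n) : piOp F = piHom n F := by
  conv_rhs => rw [← AddMonoidAlgebra.sum_coeff_single F]
  rw [map_finsuppSum]
  exact Finsupp.sum_congr fun e _ => (piHom_single e _).symm

lemma CT_piHom (F : Lau n) : CT (piHom n F) = CT F :=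
  AddMonoidAlgebra.coeff_twistMapDomain_zero (AddEquiv.injective _) _ F

lemma sc_mul_mono (c : RatFunc ℚ) (e : Fin (n+1) →₀ ℤ) :
    (sc c : Lau n) * mono e = AddMonoidAlgebra.single e c := by
  rw [sc, mono, AddMonoidAlgebra.single_mul_single, zero_add, mul_one]

def dysonFactor (a : Fin (n+1) → ℕ) (i j : Fin (n+1)) : Lau n :=
  ∏ k ∈ Finset.range (a i),
    (1 - sc (qq ^ (k + if j < i then 1 else 0)) * mono (single i 1 - single j 1))

lemma qDyson_eq_prod_offDiag (a : Fin (n+1) → ℕ) :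
    qDyson n a = ∏ p ∈ (Finset.univ : Finset (Fin (n+1))).offDiag, dysonFactor a p.1 p.2 := by
  rw [Finset.prod_offDiag_univ_eq_prod_lt]
  refine Finset.prod_congr rfl fun p hp => ?_
  have hlt : p.1 < p.2 := (Finset.mem_filter.mp hp).2
  simp [dysonFactor, hlt, not_lt_of_gt hlt]

lemma ite_finRotate_lt_finRotate (i j : Fin (n+1)) :
    (if finRotate (n+1) j < finRotate (n+1) i then 1 else 0 : ℤ) =
      (if j < i then 1 else 0) - (single i 1 - single j 1 : Fin (n+1) →₀ ℤ) (Fin.last n) := by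
  simp only [Fin.lt_def, coe_finRotate, Finsupp.sub_apply, Finsupp.single_apply,
    Fin.ext_iff, Fin.val_last]
  split_ifs <;> omega

lemma cyc_single_sub_single (i j : Fin (n+1)) :
    cyc (single i 1 - single j 1) = single (finRotate (n+1) i) 1 - single (finRotate (n+1) j) 1 :=
  (map_sub (Finsupp.domCongr (finRotate (n+1))) _ _).trans (by simp)

lemma piHom_dysonFactor (a : Fin (n+1) → ℕ) (i j : Fin (n+1)) :
    piHom n (dysonFactor a i j) =
      dysonFactor (a ∘ (finRotate (n+1)).symm) (finRotate (n+1) i) (finRotate (n+1) j) := by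
  simp only [dysonFactor, map_prod, Function.comp_apply, Equiv.symm_apply_apply]
  refine Finset.prod_congr rfl fun k _ => ?_
  rw [map_sub, map_one, sc_mul_mono, sc_mul_mono, piHom_single, cyc_single_sub_single,
    ← zpow_natCast, ← zpow_natCast, ← zpow_add₀ qq_ne_zero]
  simp only [Nat.cast_add, Nat.cast_ite, Nat.cast_one, Nat.cast_zero,
    ite_finRotate_lt_finRotate, ← sub_eq_add_neg, add_sub_assoc]

lemma piHom_qDyson (a : Fin (n+1) → ℕ) :
    piHom n (qDyson n a) = qDyson n (a ∘ (finRotate (n+1)).symm) := by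
  rw [qDyson_eq_prod_offDiag, qDyson_eq_prod_offDiag, map_prod]
  exact Finset.prod_equiv ((finRotate (n+1)).prodCongr (finRotate (n+1))) (by simp)
    fun p _ => piHom_dysonFactor a p.1 p.2

end QDyson

/-- `π` cyclically permutes the parameters of the q-Dyson product
(`(a_0,…,a_n) ↦ (a_n, a_0, …, a_{n-1})`), and consequently constant terms
against the q-Dyson product may be computed after applying `π`. -/
theorem piOp_qDyson (n : ℕ) (a : Fin (n+1) → ℕ) :
    piOp (qDyson n a) = qDyson n (a ∘ (finRotate (n+1)).symm) ∧
    ∀ L : Lau n, CT (L * qDyson n a) =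
      CT (piOp L * qDyson n (a ∘ (finRotate (n+1)).symm)) := by
  have hD : piOp (qDyson n a) = qDyson n (a ∘ (finRotate (n+1)).symm) := by
    rw [QDyson.piOp_eq_piHom, QDyson.piHom_qDyson]
  refine ⟨hD, fun L => ?_⟩
  rw [← QDyson.CT_piHom, map_mul, ← QDyson.piOp_eq_piHom, ← QDyson.piOp_eq_piHom, hD]
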